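/- arXiv:math/9901124 — 2 statements merged into one kernel-verified Lean document; each statement's English description precedes it below -/
import Mathlib

section
/- If F ∈ PGL(2,ℤ) is not of finite order, then for every positive integer n the centralizer of Fⁿ in PGL(2,ℤ) equals the centralizer of F in PGL(2,ℤ); in particular the centralizer of F⁶ equals the centralizer of F. -/
open Matrix

/-- `PGL(2,ℤ)`: the quotient of `GL(2,ℤ)` by its center `{±𝟙}`. -/
abbrev PGL2Z := GL (Fin 2) ℤ ⧸ Subgroup.center (GL (Fin 2) ℤ)

/-- Cayley–Hamilton for 2×2 integer matrices. -/
private lemma ch2 (M : Matrix (Fin 2) (Fin 2) ℤ) :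
    M * M = M.trace • M - M.det • (1 : Matrix (Fin 2) (Fin 2) ℤ) := by
  ext i j
  simp only [Matrix.sub_apply, Matrix.smul_apply, smul_eq_mul, Matrix.mul_apply,
    Fin.sum_univ_two, Matrix.trace_fin_two, Matrix.det_fin_two, Matrix.one_apply]
  fin_cases i <;> fin_cases j <;> simp <;> ring

private lemma pow_rep (M : Matrix (Fin 2) (Fin 2) ℤ) (n : ℕ) :
    ∃ p q : ℤ, M ^ n = p • M + q • (1 : Matrix (Fin 2) (Fin 2) ℤ) := by
  induction n with
  | zero => exact ⟨0, 1, by simp⟩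
  | succ n ih =>
    obtain ⟨p, q, hpq⟩ := ih
    refine ⟨p * M.trace + q, -(p * M.det), ?_⟩
    rw [pow_succ, hpq, add_mul, smul_mul_assoc, smul_mul_assoc, ch2, one_mul]
    rw [smul_sub, smul_smul, smul_smul]
    module

private def E1 : GL (Fin 2) ℤ :=
  ⟨!![1,1;0,1], !![1,-1;0,1], by ext i j; fin_cases i <;> fin_cases j <;>
      simp [Matrix.mul_apply, Fin.sum_univ_two, Matrix.one_apply],
    by ext i j; fin_cases i <;> fin_cases j <;>
      simp [Matrix.mul_apply, Fin.sum_univ_two, Matrix.one_apply]⟩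

private def E2 : GL (Fin 2) ℤ :=
  ⟨!![1,0;1,1], !![1,0;-1,1], by ext i j; fin_cases i <;> fin_cases j <;>
      simp [Matrix.mul_apply, Fin.sum_univ_two, Matrix.one_apply],
    by ext i j; fin_cases i <;> fin_cases j <;>
      simp [Matrix.mul_apply, Fin.sum_univ_two, Matrix.one_apply]⟩

/-- The center of `GL(2,ℤ)` consists of `±𝟙`. -/
private lemma center_pm (Z : GL (Fin 2) ℤ) (hZ : Z ∈ Subgroup.center (GL (Fin 2) ℤ)) :
    (Z : Matrix (Fin 2) (Fin 2) ℤ) = 1 ∨ (Z : Matrix (Fin 2) (Fin 2) ℤ) = -1 := by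
  have h1 : E1 * Z = Z * E1 := (Subgroup.mem_center_iff.mp hZ) E1
  have h2 : E2 * Z = Z * E2 := (Subgroup.mem_center_iff.mp hZ) E2
  have h1' : (E1 : Matrix (Fin 2) (Fin 2) ℤ) * Z = (Z : Matrix (Fin 2) (Fin 2) ℤ) * E1 :=
    congrArg Units.val h1
  have h2' : (E2 : Matrix (Fin 2) (Fin 2) ℤ) * Z = (Z : Matrix (Fin 2) (Fin 2) ℤ) * E2 :=
    congrArg Units.val h2
  set z : Matrix (Fin 2) (Fin 2) ℤ := (Z : Matrix (Fin 2) (Fin 2) ℤ) with hz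
  have e10 : z 1 0 = 0 := by
    have := congrFun (congrFun h1' 1) 1
    simpa [E1, Matrix.mul_apply, Fin.sum_univ_two] using this
  have e01 : z 0 1 = 0 := by
    have := congrFun (congrFun h2' 0) 0
    simpa [E2, Matrix.mul_apply, Fin.sum_univ_two] using this
  have ed : z 0 0 = z 1 1 := by
    have := congrFun (congrFun h1' 0) 1
    simp [E1, Matrix.mul_apply, Fin.sum_univ_two, e01] at this
    linarith
  have hdet : z 0 0 = 1 ∨ z 0 0 = -1 := by
    have hw : z * (↑(Z⁻¹) : Matrix (Fin 2) (Fin 2) ℤ) = 1 := Z.mul_inv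
    have hu : z.det * (↑(Z⁻¹) : Matrix (Fin 2) (Fin 2) ℤ).det = 1 := by
      rw [← Matrix.det_mul, hw, Matrix.det_one]
    have : z.det = z 0 0 * z 0 0 := by
      rw [Matrix.det_fin_two, e10, e01, ed]; ring
    rw [this] at hu
    have : IsUnit (z 0 0) := IsUnit.of_mul_eq_one _ (by rw [← mul_assoc]; exact hu)
    exact Int.isUnit_iff.mp this
  rcases hdet with h | h
  · left; ext i j; fin_cases i <;> fin_cases j <;>
      simp [Matrix.one_apply, h, e10, e01, ← ed, h]
  · right; ext i j; fin_cases i <;> fin_cases j <;>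
      simp [Matrix.one_apply, h, e10, e01, ← ed, h]

private lemma neg_one_mem_center :
    (-1 : GL (Fin 2) ℤ) ∈ Subgroup.center (GL (Fin 2) ℤ) :=
  Subgroup.mem_center_iff.mpr fun g => by rw [mul_neg_one, neg_one_mul]

/-- If some power of a lift is a scalar matrix, the class in `PGL(2,ℤ)` has finite order. -/
private lemma scalar_finite (A : GL (Fin 2) ℤ) (k : ℕ) (hk : 0 < k) (c : ℤ)
    (hc : ((A : Matrix (Fin 2) (Fin 2) ℤ)) ^ k = c • (1 : Matrix (Fin 2) (Fin 2) ℤ)) :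
    IsOfFinOrder (QuotientGroup.mk A : PGL2Z) := by
  have hval : ((A ^ k : GL (Fin 2) ℤ) : Matrix (Fin 2) (Fin 2) ℤ) =
      c • (1 : Matrix (Fin 2) (Fin 2) ℤ) := by
    rw [Units.val_pow_eq_pow_val]; exact hc
  have hdet : IsUnit (((A ^ k : GL (Fin 2) ℤ) : Matrix (Fin 2) (Fin 2) ℤ)).det :=
    (Matrix.isUnit_iff_isUnit_det _).mp (A ^ k).isUnit
  rw [hval] at hdet
  have hdet2 : (c • (1 : Matrix (Fin 2) (Fin 2) ℤ)).det = c ^ 2 := by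
    rw [Matrix.det_smul, Matrix.det_one]; simp
  rw [hdet2] at hdet
  have hc2 : c ^ 2 = 1 ∨ c ^ 2 = -1 := Int.isUnit_iff.mp hdet
  have hcpm : c = 1 ∨ c = -1 := by
    rcases hc2 with h | h
    · rw [sq] at h; exact mul_self_eq_one_iff.mp h
    · exfalso; nlinarith [sq_nonneg c]
  have hAk : A ^ k = 1 ∨ A ^ k = -1 := by
    rcases hcpm with h | h
    · left; apply Units.ext; rw [hval, h, Units.val_one]; simp
    · right; apply Units.ext; rw [hval, h, Units.val_neg, Units.val_one]; simp
  rw [isOfFinOrder_iff_pow_eq_one]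
  refine ⟨k, hk, ?_⟩
  rw [← QuotientGroup.mk_pow]
  rcases hAk with h | h
  · rw [h]; rfl
  · rw [h]; exact (QuotientGroup.eq_one_iff _).mpr neg_one_mem_center

private lemma key (F : PGL2Z) (h : ¬ IsOfFinOrder F) (n : ℕ) (hn : 0 < n) :
    Subgroup.centralizer {F ^ n} = Subgroup.centralizer {F} := by
  ext S
  simp only [Subgroup.mem_centralizer_singleton_iff]
  constructor
  · intro hS
    obtain ⟨A, rfl⟩ := QuotientGroup.mk_surjective F
    obtain ⟨B, rfl⟩ := QuotientGroup.mk_surjective S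
    rw [← QuotientGroup.mk_pow, ← QuotientGroup.mk_mul, ← QuotientGroup.mk_mul,
      QuotientGroup.eq] at hS
    have hz := center_pm _ hS
    have hmain : ((B * A ^ n : GL (Fin 2) ℤ) : Matrix (Fin 2) (Fin 2) ℤ) *
        (((B * A ^ n)⁻¹ * (A ^ n * B) : GL (Fin 2) ℤ) : Matrix (Fin 2) (Fin 2) ℤ) =
        ((A ^ n * B : GL (Fin 2) ℤ) : Matrix (Fin 2) (Fin 2) ℤ) := by
      rw [← Units.val_mul, mul_inv_cancel_left]
    set a : Matrix (Fin 2) (Fin 2) ℤ := (A : Matrix (Fin 2) (Fin 2) ℤ) with ha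
    set b : Matrix (Fin 2) (Fin 2) ℤ := (B : Matrix (Fin 2) (Fin 2) ℤ) with hb
    have hvm : ((A ^ n : GL (Fin 2) ℤ) : Matrix (Fin 2) (Fin 2) ℤ) = a ^ n :=
      Units.val_pow_eq_pow_val A n
    rcases hz with hz | hz
    · -- B and A^n commute on the nose
      rw [hz, mul_one, Units.val_mul, Units.val_mul, hvm] at hmain
      -- hmain : b * a ^ n = a ^ n * b
      obtain ⟨p, q, hpq⟩ := pow_rep a n
      by_cases hp : p = 0
      · exfalso
        apply h
        refine scalar_finite A n hn q ?_
        rw [hpq, hp, zero_smul, zero_add]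
      · have hcomm : a * b = b * a := by
          rw [hpq] at hmain
          have : p • (b * a) = p • (a * b) := by
            have h' : p • (b * a) + q • b = p • (a * b) + q • b := by
              calc p • (b * a) + q • b = b * (p • a + q • (1 : Matrix (Fin 2) (Fin 2) ℤ)) := by
                    rw [mul_add, mul_smul_comm, mul_smul_comm, mul_one]
                _ = (p • a + q • (1 : Matrix (Fin 2) (Fin 2) ℤ)) * b := hmain
                _ = p • (a * b) + q • b := by
                    rw [add_mul, smul_mul_assoc, smul_mul_assoc, one_mul]
            exact add_right_cancel h'
          exact (smul_right_injective _ hp this).symm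
        have hAB : A * B = B * A := by
          apply Units.ext
          rw [Units.val_mul, Units.val_mul]
          exact hcomm
        rw [← QuotientGroup.mk_mul, ← QuotientGroup.mk_mul, hAB]
    · -- B conjugates A^n to -A^n: impossible (forces finite order)
      exfalso
      rw [hz, Units.val_mul, Units.val_mul, hvm, mul_neg_one] at hmain
      -- hmain : -(b * a ^ n) = a ^ n * b
      have hm : a ^ n = -(b * (a ^ n) * (↑(B⁻¹) : Matrix (Fin 2) (Fin 2) ℤ)) := by
        have hbinv : b * (↑(B⁻¹) : Matrix (Fin 2) (Fin 2) ℤ) = 1 := B.mul_inv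
        calc a ^ n = a ^ n * (b * (↑(B⁻¹) : Matrix (Fin 2) (Fin 2) ℤ)) := by
              rw [hbinv, mul_one]
          _ = (a ^ n * b) * (↑(B⁻¹) : Matrix (Fin 2) (Fin 2) ℤ) := by rw [mul_assoc]
          _ = -(b * a ^ n) * (↑(B⁻¹) : Matrix (Fin 2) (Fin 2) ℤ) := by rw [hmain]
          _ = -(b * (a ^ n) * (↑(B⁻¹) : Matrix (Fin 2) (Fin 2) ℤ)) := by rw [neg_mul]
      have htr : (a ^ n).trace = 0 := by
        have h1 : (a ^ n).trace = -(b * (a ^ n) * (↑(B⁻¹) : Matrix (Fin 2) (Fin 2) ℤ)).trace := by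
          rw [← Matrix.trace_neg, ← hm]
        have h2 : (b * (a ^ n) * (↑(B⁻¹) : Matrix (Fin 2) (Fin 2) ℤ)).trace = (a ^ n).trace := by
          rw [Matrix.trace_mul_comm, ← mul_assoc]
          have hbinv : (↑(B⁻¹) : Matrix (Fin 2) (Fin 2) ℤ) * b = 1 := B.inv_mul
          rw [hbinv, one_mul]
        rw [h2] at h1
        omega
      apply h
      have hsq : a ^ (2 * n) = (-(a ^ n).det) • (1 : Matrix (Fin 2) (Fin 2) ℤ) := by
        have := ch2 (a ^ n)
        rw [htr, zero_smul, zero_sub] at this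
        rw [two_mul, pow_add, this, neg_smul]
      exact scalar_finite A (2 * n) (by omega) _ hsq
  · intro hS
    have : Commute S F := hS
    exact (this.pow_right n)

/-- If `F ∈ PGL(2,ℤ)` is not of finite order, then for every positive `n` the
centralizer of `Fⁿ` equals the centralizer of `F`; in particular, the
centralizer of `F⁶` equals that of `F`. -/
theorem PGL2Z_centralizer_pow_eq (F : PGL2Z) (h : ¬ IsOfFinOrder F) :
    (∀ n : ℕ, 0 < n →
      Subgroup.centralizer {F ^ n} = Subgroup.centralizer {F}) ∧
    Subgroup.centralizer {F ^ 6} = Subgroup.centralizer {F} := by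
  exact ⟨fun n hn => key F h n hn, key F h 6 (by norm_num)⟩
end

section
/- Theorem 3, reversing part: Let F be a Nielsen trace map, i.e. a bijective polynomial map of ℂ³ preserving the Fricke–Vogt invariant I(x,y,z) = x² + y² + z² − 2xyz − 1 and fixing (1,1,1), and assume F is truly reversible in 𝒜: F ∘ F ≠ id and there exists a polynomial map G of ℂ³ preserving I with G ∘ F ∘ G⁻¹ = F⁻¹. Then every polynomial map A of ℂ³ preserving I with A ∘ F ∘ A⁻¹ = F or A ∘ F ∘ A⁻¹ = F⁻¹ can be written uniquely as A = σ ∘ H, where σ ∈ Σ = {id, σ₁, σ₂, σ₃} commutes with F, and H is a Nielsen trace map with H ∘ F ∘ H⁻¹ = F or H ∘ F ∘ H⁻¹ = F⁻¹. That is, R_𝒜(F) = K_Σ(F) ⋊ R_𝒢(F), where K_Σ(F) = {σ ∈ Σ : σ ∘ F = F ∘ σ}. -/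
open MvPolynomial

/-- The Fricke–Vogt invariant as a function on `ℂ³`. -/
noncomputable def fvInv (p : ℂ × ℂ × ℂ) : ℂ :=
  p.1 ^ 2 + p.2.1 ^ 2 + p.2.2 ^ 2 - 2 * p.1 * p.2.1 * p.2.2 - 1

/-- A map `A : ℂ³ → ℂ³` is a polynomial map if its three components are given
by polynomials in `ℂ[x,y,z]`. -/
def IsPolyMap (A : ℂ × ℂ × ℂ → ℂ × ℂ × ℂ) : Prop :=
  ∃ P Q R : MvPolynomial (Fin 3) ℂ, ∀ x y z : ℂ,
    A (x, y, z) = (eval ![x, y, z] P, eval ![x, y, z] Q, eval ![x, y, z] R)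

/-- `A` preserves the Fricke–Vogt invariant. -/
def PreservesFV (A : ℂ × ℂ × ℂ → ℂ × ℂ × ℂ) : Prop :=
  ∀ p, fvInv (A p) = fvInv p

/-- `σ₁(x,y,z) = (x,−y,−z)`. -/
def σ₁ : ℂ × ℂ × ℂ → ℂ × ℂ × ℂ := fun p => (p.1, -p.2.1, -p.2.2)

/-- `σ₂(x,y,z) = (−x,y,−z)`. -/
def σ₂ : ℂ × ℂ × ℂ → ℂ × ℂ × ℂ := fun p => (-p.1, p.2.1, -p.2.2)

/-- `σ₃(x,y,z) = (−x,−y,z)`. -/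
def σ₃ : ℂ × ℂ × ℂ → ℂ × ℂ × ℂ := fun p => (-p.1, -p.2.1, p.2.2)

/-- The set `Σ = {id, σ₁, σ₂, σ₃}`. -/
def SigmaSet : Set (ℂ × ℂ × ℂ → ℂ × ℂ × ℂ) := {id, σ₁, σ₂, σ₃}

namespace RevAux

/-- The sign map determined by a triple. -/
def sgn (e : ℂ × ℂ × ℂ) : ℂ × ℂ × ℂ → ℂ × ℂ × ℂ :=
  fun p => (e.1 * p.1, e.2.1 * p.2.1, e.2.2 * p.2.2)

/-- A triple of signs with product one. -/
def IsSign (e : ℂ × ℂ × ℂ) : Prop :=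
  (e.1 = 1 ∨ e.1 = -1) ∧ (e.2.1 = 1 ∨ e.2.1 = -1) ∧ (e.2.2 = 1 ∨ e.2.2 = -1) ∧
    e.1 * e.2.1 * e.2.2 = 1

lemma isSign_one : IsSign (1, 1, 1) := by
  refine ⟨Or.inl rfl, Or.inl rfl, Or.inl rfl, by norm_num⟩

lemma sgn_apply_one (e : ℂ × ℂ × ℂ) : sgn e (1, 1, 1) = e := by
  simp [sgn]

lemma sgn_sgn (e : ℂ × ℂ × ℂ) (he : IsSign e) : sgn e ∘ sgn e = id := by
  obtain ⟨h1, h2, h3, _⟩ := he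
  funext p
  have e1 : e.1 * e.1 = 1 := by rcases h1 with h | h <;> rw [h] <;> ring
  have e2 : e.2.1 * e.2.1 = 1 := by rcases h2 with h | h <;> rw [h] <;> ring
  have e3 : e.2.2 * e.2.2 = 1 := by rcases h3 with h | h <;> rw [h] <;> ring
  simp only [Function.comp_apply, sgn, id_eq]
  refine Prod.ext ?_ (Prod.ext ?_ ?_) <;> simp <;>
    [linear_combination p.1 * e1; linear_combination p.2.1 * e2;
     linear_combination p.2.2 * e3]

lemma mem_sigmaSet_iff {s : ℂ × ℂ × ℂ → ℂ × ℂ × ℂ} :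
    s ∈ SigmaSet ↔ ∃ e, IsSign e ∧ s = sgn e := by
  simp only [SigmaSet, Set.mem_insert_iff, Set.mem_singleton_iff]
  constructor
  · intro hs
    rcases hs with rfl | rfl | rfl | rfl
    · exact ⟨(1,1,1), isSign_one, by funext p; simp [sgn]⟩
    · exact ⟨(1,-1,-1), ⟨Or.inl rfl, Or.inr rfl, Or.inr rfl, by norm_num⟩,
        by funext p; simp [σ₁, sgn]⟩
    · exact ⟨(-1,1,-1), ⟨Or.inr rfl, Or.inl rfl, Or.inr rfl, by norm_num⟩,
        by funext p; simp [σ₂, sgn]⟩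
    · exact ⟨(-1,-1,1), ⟨Or.inr rfl, Or.inr rfl, Or.inl rfl, by norm_num⟩,
        by funext p; simp [σ₃, sgn]⟩
  · rintro ⟨⟨e1, e2, e3⟩, ⟨h1, h2, h3, hp⟩, rfl⟩
    simp only at h1 h2 h3 hp
    rcases h1 with rfl | rfl <;> rcases h2 with rfl | rfl <;> rcases h3 with rfl | rfl
    · exact Or.inl (by funext p; simp [sgn])
    · exfalso; norm_num at hp
    · exfalso; norm_num at hp
    · exact Or.inr (Or.inl (by funext p; simp [σ₁, sgn]))
    · exfalso; norm_num at hp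
    · exact Or.inr (Or.inr (Or.inl (by funext p; simp [σ₂, sgn])))
    · exact Or.inr (Or.inr (Or.inr (by funext p; simp [σ₃, sgn])))
    · exfalso; norm_num at hp


/-- The polynomial map attached to a triple of polynomials. -/
noncomputable def fmap (P Q R : MvPolynomial (Fin 3) ℂ) : ℂ × ℂ × ℂ → ℂ × ℂ × ℂ :=
  fun p => (eval ![p.1, p.2.1, p.2.2] P, eval ![p.1, p.2.1, p.2.2] Q,
    eval ![p.1, p.2.1, p.2.2] R)

lemma vec_eta (v : Fin 3 → ℂ) : ![v 0, v 1, v 2] = v := by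
  funext i; fin_cases i <;> simp

lemma isPolyMap_iff {A : ℂ × ℂ × ℂ → ℂ × ℂ × ℂ} :
    IsPolyMap A ↔ ∃ P Q R, A = fmap P Q R := by
  constructor
  · rintro ⟨P, Q, R, h⟩
    refine ⟨P, Q, R, funext fun p => ?_⟩
    have := h p.1 p.2.1 p.2.2
    simpa [fmap] using this
  · rintro ⟨P, Q, R, rfl⟩
    exact ⟨P, Q, R, fun x y z => rfl⟩

/-- The Fricke–Vogt cubic form as a polynomial (without the constant). -/
noncomputable def Jpol : MvPolynomial (Fin 3) ℂ :=
  X 0 ^ 2 + X 1 ^ 2 + X 2 ^ 2 - 2 * (X 0 * X 1 * X 2)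

def Good (P Q R : MvPolynomial (Fin 3) ℂ) : Prop :=
  P ^ 2 + Q ^ 2 + R ^ 2 - 2 * (P * Q * R) = Jpol

lemma good_of_preserves {P Q R : MvPolynomial (Fin 3) ℂ}
    (h : PreservesFV (fmap P Q R)) : Good P Q R := by
  apply MvPolynomial.funext
  intro v
  have h0 := h (v 0, v 1, v 2)
  simp only [fmap, fvInv, vec_eta] at h0
  simp only [Good, Jpol, map_add, map_sub, map_mul, map_pow, map_ofNat, eval_X]
  linear_combination h0

lemma preserves_sgn {e : ℂ × ℂ × ℂ} (he : IsSign e) : PreservesFV (sgn e) := by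
  obtain ⟨e1, e2, e3⟩ := e
  obtain ⟨h1, h2, h3, hp⟩ := he
  simp only at h1 h2 h3 hp
  intro p
  rcases h1 with rfl | rfl <;> rcases h2 with rfl | rfl <;> rcases h3 with rfl | rfl <;>
    first
      | (simp only [sgn, fvInv]; ring1)
      | exact absurd hp (by norm_num)


/-- The four distinguished singular points. -/
def sing : Set (ℂ × ℂ × ℂ) := {p | IsSign p}

lemma one_mem_sing : ((1 : ℂ), (1 : ℂ), (1 : ℂ)) ∈ sing := isSign_one

def v1 : ℂ × ℂ × ℂ → ℂ × ℂ × ℂ := fun p => (2 * p.2.1 * p.2.2 - p.1, p.2.1, p.2.2)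
def v2 : ℂ × ℂ × ℂ → ℂ × ℂ × ℂ := fun p => (p.1, 2 * p.1 * p.2.2 - p.2.1, p.2.2)
def v3 : ℂ × ℂ × ℂ → ℂ × ℂ × ℂ := fun p => (p.1, p.2.1, 2 * p.1 * p.2.1 - p.2.2)

lemma v1_invol : v1 ∘ v1 = id := by
  funext p; simp only [Function.comp_apply, v1, id_eq]; refine Prod.ext ?_ rfl; ring
lemma v2_invol : v2 ∘ v2 = id := by
  funext p; simp only [Function.comp_apply, v2, id_eq]
  refine Prod.ext rfl (Prod.ext ?_ rfl); ring
lemma v3_invol : v3 ∘ v3 = id := by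
  funext p; simp only [Function.comp_apply, v3, id_eq]
  refine Prod.ext rfl (Prod.ext rfl ?_); ring

lemma sign_cases {p : ℂ × ℂ × ℂ} (hp : p ∈ sing) :
    p = (1,1,1) ∨ p = (1,-1,-1) ∨ p = (-1,1,-1) ∨ p = (-1,-1,1) := by
  obtain ⟨p1, p2, p3⟩ := p
  obtain ⟨h1, h2, h3, hq⟩ := hp
  simp only at h1 h2 h3 hq
  rcases h1 with rfl | rfl <;> rcases h2 with rfl | rfl <;> rcases h3 with rfl | rfl <;>
    first
      | exact Or.inl rfl
      | exact Or.inr (Or.inl rfl)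
      | exact Or.inr (Or.inr (Or.inl rfl))
      | exact Or.inr (Or.inr (Or.inr rfl))
      | exact absurd hq (by norm_num)

lemma v1_fix_sing {p : ℂ × ℂ × ℂ} (hp : p ∈ sing) : v1 p = p := by
  rcases sign_cases hp with rfl | rfl | rfl | rfl <;> (simp only [v1]; norm_num)
lemma v2_fix_sing {p : ℂ × ℂ × ℂ} (hp : p ∈ sing) : v2 p = p := by
  rcases sign_cases hp with rfl | rfl | rfl | rfl <;> (simp only [v2]; norm_num)
lemma v3_fix_sing {p : ℂ × ℂ × ℂ} (hp : p ∈ sing) : v3 p = p := by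
  rcases sign_cases hp with rfl | rfl | rfl | rfl <;> (simp only [v3]; norm_num)

lemma v1_sgn_comm {e : ℂ × ℂ × ℂ} (he : IsSign e) : v1 ∘ sgn e = sgn e ∘ v1 := by
  rcases sign_cases he with rfl | rfl | rfl | rfl <;>
    (funext p; simp only [Function.comp_apply, v1, sgn];
     refine Prod.ext ?_ (Prod.ext ?_ ?_) <;> ring)
lemma v2_sgn_comm {e : ℂ × ℂ × ℂ} (he : IsSign e) : v2 ∘ sgn e = sgn e ∘ v2 := by
  rcases sign_cases he with rfl | rfl | rfl | rfl <;>
    (funext p; simp only [Function.comp_apply, v2, sgn];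
     refine Prod.ext ?_ (Prod.ext ?_ ?_) <;> ring)
lemma v3_sgn_comm {e : ℂ × ℂ × ℂ} (he : IsSign e) : v3 ∘ sgn e = sgn e ∘ v3 := by
  rcases sign_cases he with rfl | rfl | rfl | rfl <;>
    (funext p; simp only [Function.comp_apply, v3, sgn];
     refine Prod.ext ?_ (Prod.ext ?_ ?_) <;> ring)

lemma fmap_v1 (P Q R : MvPolynomial (Fin 3) ℂ) :
    v1 ∘ fmap P Q R = fmap (2 * Q * R - P) Q R := by
  funext p
  simp only [Function.comp_apply, fmap, v1, map_sub, map_mul, map_ofNat]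
lemma fmap_v2 (P Q R : MvPolynomial (Fin 3) ℂ) :
    v2 ∘ fmap P Q R = fmap P (2 * P * R - Q) R := by
  funext p
  simp only [Function.comp_apply, fmap, v2, map_sub, map_mul, map_ofNat]
lemma fmap_v3 (P Q R : MvPolynomial (Fin 3) ℂ) :
    v3 ∘ fmap P Q R = fmap P Q (2 * P * Q - R) := by
  funext p
  simp only [Function.comp_apply, fmap, v3, map_sub, map_mul, map_ofNat]

lemma fmap_sgn (e : ℂ × ℂ × ℂ) (P Q R : MvPolynomial (Fin 3) ℂ) :
    sgn e ∘ fmap P Q R = fmap (C e.1 * P) (C e.2.1 * Q) (C e.2.2 * R) := by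
  funext p
  simp only [Function.comp_apply, fmap, sgn, map_mul, eval_C]

lemma good_v1 {P Q R : MvPolynomial (Fin 3) ℂ} (h : Good P Q R) :
    Good (2 * Q * R - P) Q R := by
  unfold Good at *
  linear_combination h
lemma good_v2 {P Q R : MvPolynomial (Fin 3) ℂ} (h : Good P Q R) :
    Good P (2 * P * R - Q) R := by
  unfold Good at *
  linear_combination h
lemma good_v3 {P Q R : MvPolynomial (Fin 3) ℂ} (h : Good P Q R) :
    Good P Q (2 * P * Q - R) := by
  unfold Good at *
  linear_combination h


section Degree

variable {P Q : MvPolynomial (Fin 3) ℂ}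

lemma exists_degree_eq_totalDegree (hP : P ≠ 0) :
    ∃ d ∈ P.support, d.degree = P.totalDegree := by
  obtain ⟨b, hb, hb2⟩ := P.support.exists_mem_eq_sup
    (MvPolynomial.support_nonempty.mpr hP) (fun s => s.sum fun _ e => e)
  exact ⟨b, hb, by rw [totalDegree, hb2]; rfl⟩

/-- The top homogeneous component of a polynomial. -/
noncomputable def topc (P : MvPolynomial (Fin 3) ℂ) : MvPolynomial (Fin 3) ℂ :=
  homogeneousComponent P.totalDegree P

lemma topc_ne_zero (hP : P ≠ 0) : topc P ≠ 0 := by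
  obtain ⟨d, hd, hdeg⟩ := exists_degree_eq_totalDegree hP
  intro h
  have := coeff_homogeneousComponent (n := P.totalDegree) (φ := P) d
  rw [← topc, h, if_pos hdeg] at this
  simp only [coeff_zero] at this
  exact (mem_support_iff.mp hd) this.symm

lemma topc_isHomogeneous (P : MvPolynomial (Fin 3) ℂ) :
    (topc P).IsHomogeneous P.totalDegree :=
  homogeneousComponent_isHomogeneous P.totalDegree P

lemma totalDegree_sub_topc_lt (hP : P ≠ 0) (h : P - topc P ≠ 0) :
    (P - topc P).totalDegree < P.totalDegree := by
  have hsupp : ∀ d ∈ (P - topc P).support, d.degree < P.totalDegree := by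
    intro d hd
    rw [mem_support_iff] at hd
    have hc : coeff d (P - topc P) = coeff d P -
        coeff d (homogeneousComponent P.totalDegree P) := by
      simp [topc, coeff_sub]
    rw [coeff_homogeneousComponent] at hc
    by_cases hdeg : d.degree = P.totalDegree
    · rw [if_pos hdeg] at hc; simp at hc; exact absurd hc hd
    · refine lt_of_le_of_ne ?_ hdeg
      rw [if_neg hdeg, sub_zero] at hc
      have : d ∈ P.support := by
        rw [mem_support_iff, ← hc]; exact hd
      exact le_totalDegree this
  have h0 : P.totalDegree ≠ 0 := by
    intro h0
    obtain ⟨d, hd⟩ := (P - topc P).support.exists_mem_eq_sup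
      (MvPolynomial.support_nonempty.mpr h) (fun s => s.sum fun _ e => e)
    have := hsupp d hd.1
    omega
  rcases Nat.exists_eq_succ_of_ne_zero h0 with ⟨k, hk⟩
  rw [hk]
  rw [Nat.lt_succ_iff]
  apply Finset.sup_le
  intro d hd
  have := hsupp d hd
  have hdd : (d.sum fun _ e => e) = d.degree := rfl
  omega

lemma totalDegree_mul_eq (hP : P ≠ 0) (hQ : Q ≠ 0) :
    (P * Q).totalDegree = P.totalDegree + Q.totalDegree := by
  refine le_antisymm (totalDegree_mul P Q) ?_
  set n := P.totalDegree + Q.totalDegree with hn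
  have key : homogeneousComponent n (P * Q) = topc P * topc Q := by
    have hdecomp : P * Q = topc P * topc Q +
        ((P - topc P) * Q + topc P * (Q - topc Q)) := by ring
    rw [hdecomp, map_add]
    have h1 : homogeneousComponent n ((P - topc P) * Q + topc P * (Q - topc Q)) = 0 := by
      rw [map_add]
      have hz : ∀ (f : MvPolynomial (Fin 3) ℂ), f.totalDegree < n →
          homogeneousComponent n f = 0 := fun f hf => homogeneousComponent_eq_zero _ _ hf
      have e1 : homogeneousComponent n ((P - topc P) * Q) = 0 := by
        by_cases hc : P - topc P = 0
        · rw [hc, zero_mul, map_zero]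
        · apply hz
          calc ((P - topc P) * Q).totalDegree ≤ (P - topc P).totalDegree + Q.totalDegree :=
                totalDegree_mul _ _
            _ < n := by
                have := totalDegree_sub_topc_lt hP hc; omega
      have e2 : homogeneousComponent n (topc P * (Q - topc Q)) = 0 := by
        by_cases hc : Q - topc Q = 0
        · rw [hc, mul_zero, map_zero]
        · apply hz
          calc (topc P * (Q - topc Q)).totalDegree ≤
                (topc P).totalDegree + (Q - topc Q).totalDegree := totalDegree_mul _ _
            _ < n := by
                have h1 := totalDegree_sub_topc_lt hQ hc
                have h2 := (topc_isHomogeneous P).totalDegree_le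
                omega
      rw [e1, e2, add_zero]
    rw [h1, add_zero]
    have hhom : (topc P * topc Q).IsHomogeneous n :=
      (topc_isHomogeneous P).mul (topc_isHomogeneous Q)
    have := homogeneousComponent_of_mem ((mem_homogeneousSubmodule _ _).mpr hhom)
      (m := n)
    rw [this, if_pos rfl]
  have hne : homogeneousComponent n (P * Q) ≠ 0 := by
    rw [key]
    exact mul_ne_zero (topc_ne_zero hP) (topc_ne_zero hQ)
  by_contra hlt
  push_neg at hlt
  exact hne (homogeneousComponent_eq_zero _ _ hlt)

end Degree


section DegreeBounds

variable {P Q R : MvPolynomial (Fin 3) ℂ}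

lemma two_eq_C : (2 : MvPolynomial (Fin 3) ℂ) = C 2 := by
  rw [map_ofNat]

lemma tdeg_two : (2 : MvPolynomial (Fin 3) ℂ).totalDegree = 0 := by
  rw [two_eq_C, totalDegree_C]

lemma tdeg_J : Jpol.totalDegree ≤ 3 := by
  have hX : ∀ i : Fin 3, (X i : MvPolynomial (Fin 3) ℂ).totalDegree = 1 :=
    fun i => totalDegree_X i
  have h1 : ((X 0 : MvPolynomial (Fin 3) ℂ) ^ 2).totalDegree ≤ 3 := by
    have := totalDegree_pow (X 0 : MvPolynomial (Fin 3) ℂ) 2; rw [hX 0] at this; omega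
  have h2 : ((X 1 : MvPolynomial (Fin 3) ℂ) ^ 2).totalDegree ≤ 3 := by
    have := totalDegree_pow (X 1 : MvPolynomial (Fin 3) ℂ) 2; rw [hX 1] at this; omega
  have h3 : ((X 2 : MvPolynomial (Fin 3) ℂ) ^ 2).totalDegree ≤ 3 := by
    have := totalDegree_pow (X 2 : MvPolynomial (Fin 3) ℂ) 2; rw [hX 2] at this; omega
  have h4 : ((2 : MvPolynomial (Fin 3) ℂ) * (X 0 * X 1 * X 2)).totalDegree ≤ 3 := by
    have hm1 := totalDegree_mul (X 0 : MvPolynomial (Fin 3) ℂ) (X 1)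
    have hm2 := totalDegree_mul ((X 0 : MvPolynomial (Fin 3) ℂ) * X 1) (X 2)
    have hm3 := totalDegree_mul (2 : MvPolynomial (Fin 3) ℂ) (X 0 * X 1 * X 2)
    rw [hX 0, hX 1] at hm1
    rw [hX 2] at hm2
    rw [tdeg_two] at hm3
    omega
  unfold Jpol
  have a1 := totalDegree_add ((X 0 : MvPolynomial (Fin 3) ℂ) ^ 2) (X 1 ^ 2)
  have a2 := totalDegree_add ((X 0 : MvPolynomial (Fin 3) ℂ) ^ 2 + X 1 ^ 2) (X 2 ^ 2)
  have a3 := totalDegree_sub ((X 0 : MvPolynomial (Fin 3) ℂ) ^ 2 + X 1 ^ 2 + X 2 ^ 2)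
    (2 * (X 0 * X 1 * X 2))
  omega

lemma eq_C_of_tdeg_zero (h : P.totalDegree = 0) : P = C (coeff 0 P) := by
  ext d
  by_cases hd : d = 0
  · subst hd; simp
  · rw [coeff_C, if_neg (Ne.symm hd)]
    by_contra hc
    have hds : d ∈ P.support := mem_support_iff.mpr hc
    have := le_totalDegree hds
    rw [h, Nat.le_zero] at this
    have hd0 : d.degree = 0 := this
    exact hd (Finsupp.degree_eq_zero_iff d |>.mp hd0)

lemma surj_fst_ne (hs : Function.Surjective (fmap P Q R)) (c : ℂ) : P ≠ C c := by
  rintro rfl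
  obtain ⟨p, hp⟩ := hs (c + 1, 0, 0)
  have := congrArg Prod.fst hp
  simp only [fmap, eval_C] at this
  exact absurd this (by intro h; exact one_ne_zero (show (1:ℂ) = 0 by linear_combination -h))

lemma surj_snd_ne (hs : Function.Surjective (fmap P Q R)) (c : ℂ) : Q ≠ C c := by
  rintro rfl
  obtain ⟨p, hp⟩ := hs (0, c + 1, 0)
  have := congrArg (fun q => q.2.1) hp
  simp only [fmap, eval_C] at this
  exact absurd this (by intro h; exact one_ne_zero (show (1:ℂ) = 0 by linear_combination -h))

lemma surj_thd_ne (hs : Function.Surjective (fmap P Q R)) (c : ℂ) : R ≠ C c := by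
  rintro rfl
  obtain ⟨p, hp⟩ := hs (0, 0, c + 1)
  have := congrArg (fun q => q.2.2) hp
  simp only [fmap, eval_C] at this
  exact absurd this (by intro h; exact one_ne_zero (show (1:ℂ) = 0 by linear_combination -h))

lemma one_le_tdeg_of_ne_C (h : ∀ c : ℂ, P ≠ C c) : 1 ≤ P.totalDegree := by
  by_contra hc
  push_neg at hc
  rw [Nat.lt_one_iff] at hc
  exact h _ (eq_C_of_tdeg_zero hc)

lemma ne_zero_of_ne_C (h : ∀ c : ℂ, P ≠ C c) : P ≠ 0 := by
  intro h0; exact h 0 (by rw [h0, map_zero])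

end DegreeBounds


section VietaBound

variable {P Q R : MvPolynomial (Fin 3) ℂ}

lemma two_ne_zero' : (2 : MvPolynomial (Fin 3) ℂ) ≠ 0 := by
  rw [two_eq_C]
  simp only [ne_eq, map_eq_zero]
  norm_num

lemma sum_le_of_good (hG : Good P Q R) (hP : P ≠ 0) (hQ : Q ≠ 0) (hR : R ≠ 0)
    (hPR : P.totalDegree ≤ R.totalDegree) (hQR : Q.totalDegree ≤ R.totalDegree)
    (hR2 : 2 ≤ R.totalDegree) :
    P.totalDegree + Q.totalDegree ≤ R.totalDegree := by
  have hkey : (2 : MvPolynomial (Fin 3) ℂ) * (P * Q * R) = P ^ 2 + Q ^ 2 + R ^ 2 - Jpol := by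
    unfold Good at hG
    linear_combination -hG
  have hPQ : P * Q ≠ 0 := mul_ne_zero hP hQ
  have hPQR : P * Q * R ≠ 0 := mul_ne_zero hPQ hR
  have hL : ((2 : MvPolynomial (Fin 3) ℂ) * (P * Q * R)).totalDegree =
      P.totalDegree + Q.totalDegree + R.totalDegree := by
    rw [totalDegree_mul_eq two_ne_zero' hPQR, tdeg_two,
      totalDegree_mul_eq hPQ hR, totalDegree_mul_eq hP hQ]
    omega
  have hR' : (P ^ 2 + Q ^ 2 + R ^ 2 - Jpol).totalDegree ≤ 2 * R.totalDegree := by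
    have b1 := totalDegree_pow P 2
    have b2 := totalDegree_pow Q 2
    have b3 := totalDegree_pow R 2
    have a1 := totalDegree_add (P ^ 2) (Q ^ 2)
    have a2 := totalDegree_add (P ^ 2 + Q ^ 2) (R ^ 2)
    have a3 := totalDegree_sub (P ^ 2 + Q ^ 2 + R ^ 2) Jpol
    have := tdeg_J
    omega
  rw [hkey] at hL
  omega

lemma vieta_bound (hG : Good P Q R) (hP : P ≠ 0) (hQ : Q ≠ 0) (hR : R ≠ 0)
    (hP1 : 1 ≤ P.totalDegree) (hQ1 : 1 ≤ Q.totalDegree)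
    (hPR : P.totalDegree ≤ R.totalDegree) (hQR : Q.totalDegree ≤ R.totalDegree)
    (hR2 : 2 ≤ R.totalDegree) (hne : 2 * P * Q - R ≠ 0) :
    (2 * P * Q - R).totalDegree < R.totalDegree := by
  have hsum := sum_le_of_good hG hP hQ hR hPR hQR hR2
  have hkey : (2 * P * Q - R) * R = P ^ 2 + Q ^ 2 - Jpol := by
    unfold Good at hG
    linear_combination -hG
  have hmul : ((2 * P * Q - R) * R).totalDegree =
      (2 * P * Q - R).totalDegree + R.totalDegree := totalDegree_mul_eq hne hR
  have hb : (P ^ 2 + Q ^ 2 - Jpol).totalDegree ≤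
      max (max (2 * P.totalDegree) (2 * Q.totalDegree)) 3 := by
    have b1 := totalDegree_pow P 2
    have b2 := totalDegree_pow Q 2
    have a1 := totalDegree_add (P ^ 2) (Q ^ 2)
    have a2 := totalDegree_sub (P ^ 2 + Q ^ 2) Jpol
    have := tdeg_J
    omega
  rw [hkey] at hmul
  omega

end VietaBound


section Affine

variable {P : MvPolynomial (Fin 3) ℂ}

lemma deg_le_one_cases (d : Fin 3 →₀ ℕ) (h : d.degree ≤ 1) :
    d = 0 ∨ d = Finsupp.single 0 1 ∨ d = Finsupp.single 1 1 ∨ d = Finsupp.single 2 1 := by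
  have hdeg : d.degree = d 0 + d 1 + d 2 := by
    have h1 : d.degree = ∑ i : Fin 3, d i := by
      rw [Finsupp.degree]
      refine Finset.sum_subset (Finset.subset_univ _) ?_
      intro i _ hi
      exact Finsupp.notMem_support_iff.mp hi
    rw [h1, Fin.sum_univ_three]
  rw [hdeg] at h
  have hext : ∀ i : Fin 3, (d 0 = 0 → d 1 = 0 → d 2 = 0 → d i = 0) := by
    intro i h0 h1 h2; fin_cases i <;> assumption
  by_cases h0 : d 0 = 1
  · right; left
    ext i
    fin_cases i <;> simp [Finsupp.single_apply] <;> omega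
  · by_cases h1 : d 1 = 1
    · right; right; left
      ext i
      fin_cases i <;> simp [Finsupp.single_apply] <;> omega
    · by_cases h2 : d 2 = 1
      · right; right; right
        ext i
        fin_cases i <;> simp [Finsupp.single_apply] <;> omega
      · left
        ext i
        fin_cases i <;> simp <;> omega

lemma affine_rep (h : P.totalDegree ≤ 1) :
    ∃ a b c d : ℂ, ∀ v : Fin 3 → ℂ, eval v P = a + b * v 0 + c * v 1 + d * v 2 := by
  classical
  refine ⟨coeff 0 P, coeff (Finsupp.single 0 1) P, coeff (Finsupp.single 1 1) P,
    coeff (Finsupp.single 2 1) P, fun v => ?_⟩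
  rw [eval_eq']
  have hsub : P.support ⊆ {0, Finsupp.single 0 1, Finsupp.single 1 1, Finsupp.single 2 1} := by
    intro d hd
    have hdeg : d.degree ≤ 1 := le_trans (le_totalDegree hd) h
    rcases deg_le_one_cases d hdeg with rfl | rfl | rfl | rfl <;> simp
  rw [Finset.sum_subset hsub (fun d _ hd => by
    rw [MvPolynomial.notMem_support_iff.mp hd, zero_mul])]
  have hs0 : (Finsupp.single (0 : Fin 3) 1 : Fin 3 →₀ ℕ) ≠ 0 := by
    intro hh; have := DFunLike.congr_fun hh 0; simp [Finsupp.single_apply] at this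
  have hs1 : (Finsupp.single (1 : Fin 3) 1 : Fin 3 →₀ ℕ) ≠ 0 := by
    intro hh; have := DFunLike.congr_fun hh 1; simp [Finsupp.single_apply] at this
  have hs2 : (Finsupp.single (2 : Fin 3) 1 : Fin 3 →₀ ℕ) ≠ 0 := by
    intro hh; have := DFunLike.congr_fun hh 2; simp [Finsupp.single_apply] at this
  have h01 : (Finsupp.single (0 : Fin 3) 1 : Fin 3 →₀ ℕ) ≠ Finsupp.single 1 1 := by
    intro hh; have := DFunLike.congr_fun hh 0; simp [Finsupp.single_apply] at this
  have h02 : (Finsupp.single (0 : Fin 3) 1 : Fin 3 →₀ ℕ) ≠ Finsupp.single 2 1 := by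
    intro hh; have := DFunLike.congr_fun hh 0; simp [Finsupp.single_apply] at this
  have h12 : (Finsupp.single (1 : Fin 3) 1 : Fin 3 →₀ ℕ) ≠ Finsupp.single 2 1 := by
    intro hh; have := DFunLike.congr_fun hh 1; simp [Finsupp.single_apply] at this
  rw [Finset.sum_insert (by
    simp only [Finset.mem_insert, Finset.mem_singleton]
    push_neg
    exact ⟨Ne.symm hs0, Ne.symm hs1, Ne.symm hs2⟩)]
  rw [Finset.sum_insert (by
    simp only [Finset.mem_insert, Finset.mem_singleton]
    push_neg
    exact ⟨h01, h02⟩)]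
  rw [Finset.sum_insert (by simp only [Finset.mem_singleton]; exact h12)]
  rw [Finset.sum_singleton]
  have p0 : (∏ i : Fin 3, v i ^ (0 : Fin 3 →₀ ℕ) i) = 1 := by simp
  have p1 : (∏ i : Fin 3, v i ^ (Finsupp.single (0 : Fin 3) 1) i) = v 0 := by
    rw [Fin.prod_univ_three]
    simp [Finsupp.single_apply]
  have p2 : (∏ i : Fin 3, v i ^ (Finsupp.single (1 : Fin 3) 1) i) = v 1 := by
    rw [Fin.prod_univ_three]
    simp [Finsupp.single_apply]
  have p3 : (∏ i : Fin 3, v i ^ (Finsupp.single (2 : Fin 3) 1) i) = v 2 := by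
    rw [Fin.prod_univ_three]
    simp [Finsupp.single_apply]
  rw [p0, p1, p2, p3]
  ring

end Affine


/-- The inductive conclusion: the map preserves the singular points and
normalizes the sign maps. -/
def Concl (f : ℂ × ℂ × ℂ → ℂ × ℂ × ℂ) : Prop :=
  (∀ p ∈ sing, f p ∈ sing) ∧
  ∀ e : ℂ × ℂ × ℂ, IsSign e → ∃ t, IsSign t ∧ f ∘ sgn e = sgn t ∘ f

lemma pm_mul {u v : ℂ} (hu : u = 1 ∨ u = -1) (hv : v = 1 ∨ v = -1) :
    u * v = 1 ∨ u * v = -1 := by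
  rcases hu with rfl | rfl <;> rcases hv with rfl | rfl <;> norm_num

lemma sq_pm {u : ℂ} (h : u ^ 2 = 1) : u = 1 ∨ u = -1 := by
  have hf : (u - 1) * (u + 1) = 0 := by linear_combination h
  rcases mul_eq_zero.mp hf with h | h
  · left; linear_combination h
  · right; linear_combination h

lemma concl_diag_id {{α β γ : ℂ}} (hα : α = 1 ∨ α = -1) (hβ : β = 1 ∨ β = -1)
    (hγ : γ = 1 ∨ γ = -1) (hprod : α * β * γ = 1) :
    Concl (fun p : ℂ × ℂ × ℂ => (α * p.1, β * p.2.1, γ * p.2.2)) := by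
  constructor
  · rintro ⟨p1, p2, p3⟩ ⟨h1, h2, h3, h4⟩
    simp only at h1 h2 h3 h4 ⊢
    exact ⟨pm_mul hα h1, pm_mul hβ h2, pm_mul hγ h3,
      by simp only; linear_combination (p1 * p2 * p3) * hprod + h4⟩
  · rintro ⟨e1, e2, e3⟩ ⟨h1, h2, h3, h4⟩
    simp only at h1 h2 h3 h4
    refine ⟨(e1, e2, e3), ⟨h1, h2, h3, by simp only; linear_combination h4⟩, ?_⟩
    funext p
    simp only [Function.comp_apply, sgn]
    refine Prod.ext ?_ (Prod.ext ?_ ?_) <;> simp only <;> ring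

lemma concl_diag_c1 {{α β γ : ℂ}} (hα : α = 1 ∨ α = -1) (hβ : β = 1 ∨ β = -1)
    (hγ : γ = 1 ∨ γ = -1) (hprod : α * β * γ = 1) :
    Concl (fun p : ℂ × ℂ × ℂ => (α * p.2.1, β * p.2.2, γ * p.1)) := by
  constructor
  · rintro ⟨p1, p2, p3⟩ ⟨h1, h2, h3, h4⟩
    simp only at h1 h2 h3 h4 ⊢
    exact ⟨pm_mul hα h2, pm_mul hβ h3, pm_mul hγ h1,
      by simp only; linear_combination (p1 * p2 * p3) * hprod + h4⟩
  · rintro ⟨e1, e2, e3⟩ ⟨h1, h2, h3, h4⟩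
    simp only at h1 h2 h3 h4
    refine ⟨(e2, e3, e1), ⟨h2, h3, h1, by simp only; linear_combination h4⟩, ?_⟩
    funext p
    simp only [Function.comp_apply, sgn]
    refine Prod.ext ?_ (Prod.ext ?_ ?_) <;> simp only <;> ring

lemma concl_diag_c2 {{α β γ : ℂ}} (hα : α = 1 ∨ α = -1) (hβ : β = 1 ∨ β = -1)
    (hγ : γ = 1 ∨ γ = -1) (hprod : α * β * γ = 1) :
    Concl (fun p : ℂ × ℂ × ℂ => (α * p.2.2, β * p.1, γ * p.2.1)) := by
  constructor
  · rintro ⟨p1, p2, p3⟩ ⟨h1, h2, h3, h4⟩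
    simp only at h1 h2 h3 h4 ⊢
    exact ⟨pm_mul hα h3, pm_mul hβ h1, pm_mul hγ h2,
      by simp only; linear_combination (p1 * p2 * p3) * hprod + h4⟩
  · rintro ⟨e1, e2, e3⟩ ⟨h1, h2, h3, h4⟩
    simp only at h1 h2 h3 h4
    refine ⟨(e3, e1, e2), ⟨h3, h1, h2, by simp only; linear_combination h4⟩, ?_⟩
    funext p
    simp only [Function.comp_apply, sgn]
    refine Prod.ext ?_ (Prod.ext ?_ ?_) <;> simp only <;> ring

lemma concl_diag_s23 {{α β γ : ℂ}} (hα : α = 1 ∨ α = -1) (hβ : β = 1 ∨ β = -1)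
    (hγ : γ = 1 ∨ γ = -1) (hprod : α * β * γ = 1) :
    Concl (fun p : ℂ × ℂ × ℂ => (α * p.1, β * p.2.2, γ * p.2.1)) := by
  constructor
  · rintro ⟨p1, p2, p3⟩ ⟨h1, h2, h3, h4⟩
    simp only at h1 h2 h3 h4 ⊢
    exact ⟨pm_mul hα h1, pm_mul hβ h3, pm_mul hγ h2,
      by simp only; linear_combination (p1 * p2 * p3) * hprod + h4⟩
  · rintro ⟨e1, e2, e3⟩ ⟨h1, h2, h3, h4⟩
    simp only at h1 h2 h3 h4
    refine ⟨(e1, e3, e2), ⟨h1, h3, h2, by simp only; linear_combination h4⟩, ?_⟩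
    funext p
    simp only [Function.comp_apply, sgn]
    refine Prod.ext ?_ (Prod.ext ?_ ?_) <;> simp only <;> ring

lemma concl_diag_s12 {{α β γ : ℂ}} (hα : α = 1 ∨ α = -1) (hβ : β = 1 ∨ β = -1)
    (hγ : γ = 1 ∨ γ = -1) (hprod : α * β * γ = 1) :
    Concl (fun p : ℂ × ℂ × ℂ => (α * p.2.1, β * p.1, γ * p.2.2)) := by
  constructor
  · rintro ⟨p1, p2, p3⟩ ⟨h1, h2, h3, h4⟩
    simp only at h1 h2 h3 h4 ⊢
    exact ⟨pm_mul hα h2, pm_mul hβ h1, pm_mul hγ h3,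
      by simp only; linear_combination (p1 * p2 * p3) * hprod + h4⟩
  · rintro ⟨e1, e2, e3⟩ ⟨h1, h2, h3, h4⟩
    simp only at h1 h2 h3 h4
    refine ⟨(e2, e1, e3), ⟨h2, h1, h3, by simp only; linear_combination h4⟩, ?_⟩
    funext p
    simp only [Function.comp_apply, sgn]
    refine Prod.ext ?_ (Prod.ext ?_ ?_) <;> simp only <;> ring

lemma concl_diag_s13 {{α β γ : ℂ}} (hα : α = 1 ∨ α = -1) (hβ : β = 1 ∨ β = -1)
    (hγ : γ = 1 ∨ γ = -1) (hprod : α * β * γ = 1) :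
    Concl (fun p : ℂ × ℂ × ℂ => (α * p.2.2, β * p.2.1, γ * p.1)) := by
  constructor
  · rintro ⟨p1, p2, p3⟩ ⟨h1, h2, h3, h4⟩
    simp only at h1 h2 h3 h4 ⊢
    exact ⟨pm_mul hα h3, pm_mul hβ h2, pm_mul hγ h1,
      by simp only; linear_combination (p1 * p2 * p3) * hprod + h4⟩
  · rintro ⟨e1, e2, e3⟩ ⟨h1, h2, h3, h4⟩
    simp only at h1 h2 h3 h4
    refine ⟨(e3, e2, e1), ⟨h3, h2, h1, by simp only; linear_combination h4⟩, ?_⟩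
    funext p
    simp only [Function.comp_apply, sgn]
    refine Prod.ext ?_ (Prod.ext ?_ ?_) <;> simp only <;> ring


lemma poly2_ne_zero {u1 u2 : ℂ} (h : ¬(u1 = 0 ∧ u2 = 0)) :
    (Polynomial.C u1 + Polynomial.C u2 * Polynomial.X : Polynomial ℂ) ≠ 0 := by
  intro h0
  apply h
  constructor
  · have := congrArg (Polynomial.coeff · 0) h0
    simpa using this
  · have := congrArg (Polynomial.coeff · 1) h0
    simpa using this

lemma three_linear_forms {u1 u2 w1 w2 t1 t2 : ℂ}
    (h : ∀ y z : ℂ, (u1 * y + u2 * z) * (w1 * y + w2 * z) * (t1 * y + t2 * z) = 0) :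
    (u1 = 0 ∧ u2 = 0) ∨ (w1 = 0 ∧ w2 = 0) ∨ (t1 = 0 ∧ t2 = 0) := by
  by_contra hcon
  rw [not_or, not_or] at hcon
  obtain ⟨hu, hw, ht⟩ := hcon
  have hu' := poly2_ne_zero hu
  have hw' := poly2_ne_zero hw
  have ht' := poly2_ne_zero ht
  have hprod : (Polynomial.C u1 + Polynomial.C u2 * Polynomial.X) *
      (Polynomial.C w1 + Polynomial.C w2 * Polynomial.X) *
      (Polynomial.C t1 + Polynomial.C t2 * Polynomial.X) ≠ 0 :=
    mul_ne_zero (mul_ne_zero hu' hw') ht'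
  apply hprod
  apply Polynomial.funext
  intro z
  have := h 1 z
  simp only [Polynomial.eval_mul, Polynomial.eval_add, Polynomial.eval_C,
    Polynomial.eval_mul, Polynomial.eval_X, Polynomial.eval_zero]
  linear_combination this


lemma base_case {P Q R : MvPolynomial (Fin 3) ℂ} (hG : Good P Q R)
    (hs : Function.Surjective (fmap P Q R))
    (h1 : P.totalDegree ≤ 1) (h2 : Q.totalDegree ≤ 1) (h3 : R.totalDegree ≤ 1) :
    Concl (fmap P Q R) := by
  obtain ⟨a0, a1, a2, a3, ha⟩ := affine_rep h1
  obtain ⟨b0, b1, b2, b3, hb⟩ := affine_rep h2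
  obtain ⟨c0, c1, c2, c3, hc⟩ := affine_rep h3
  have hfm : ∀ p : ℂ × ℂ × ℂ, fmap P Q R p =
      (a0 + a1 * p.1 + a2 * p.2.1 + a3 * p.2.2,
       b0 + b1 * p.1 + b2 * p.2.1 + b3 * p.2.2,
       c0 + c1 * p.1 + c2 * p.2.1 + c3 * p.2.2) := by
    intro p
    have e0 : (![p.1, p.2.1, p.2.2] : Fin 3 → ℂ) 0 = p.1 := rfl
    have e1 : (![p.1, p.2.1, p.2.2] : Fin 3 → ℂ) 1 = p.2.1 := rfl
    have e2 : (![p.1, p.2.1, p.2.2] : Fin 3 → ℂ) 2 = p.2.2 := rfl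
    simp only [fmap, ha, hb, hc, e0, e1, e2]
  have hfun : ∀ x y z : ℂ,
      (a0 + a1*x + a2*y + a3*z)^2 + (b0 + b1*x + b2*y + b3*z)^2 + (c0 + c1*x + c2*y + c3*z)^2
        - 2*((a0 + a1*x + a2*y + a3*z)*(b0 + b1*x + b2*y + b3*z)*(c0 + c1*x + c2*y + c3*z))
        = x^2 + y^2 + z^2 - 2*(x*y*z) := by
    intro x y z
    have hv := congrArg (eval ![x, y, z]) hG
    simp only [Jpol, map_add, map_sub, map_mul, map_pow, map_ofNat, eval_X] at hv
    rw [ha, hb, hc] at hv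
    have e0 : (![x, y, z] : Fin 3 → ℂ) 0 = x := rfl
    have e1 : (![x, y, z] : Fin 3 → ℂ) 1 = y := rfl
    have e2 : (![x, y, z] : Fin 3 → ℂ) 2 = z := rfl
    rw [e0, e1, e2] at hv
    linear_combination hv
  have hcube : ∀ x y z : ℂ,
      (a1*x + a2*y + a3*z) * (b1*x + b2*y + b3*z) * (c1*x + c2*y + c3*z) = x*y*z := by
    intro x y z
    have h0 := hfun 0 0 0
    have hp1 := hfun x y z
    have hm1 := hfun (-x) (-y) (-z)
    have hp2 := hfun (2*x) (2*y) (2*z)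
    linear_combination (-1/12 : ℂ) * hp2 + (1/4 : ℂ) * hp1 + (1/12 : ℂ) * hm1 - (1/4 : ℂ) * h0
  have hquad : ∀ x y z : ℂ,
      (a1*x + a2*y + a3*z)^2 + (b1*x + b2*y + b3*z)^2 + (c1*x + c2*y + c3*z)^2
        - 2*(a0 * ((b1*x + b2*y + b3*z)*(c1*x + c2*y + c3*z))
           + b0 * ((a1*x + a2*y + a3*z)*(c1*x + c2*y + c3*z))
           + c0 * ((a1*x + a2*y + a3*z)*(b1*x + b2*y + b3*z)))
        = x^2 + y^2 + z^2 := by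
    intro x y z
    have h0 := hfun 0 0 0
    have hp1 := hfun x y z
    have hm1 := hfun (-x) (-y) (-z)
    linear_combination (1/2 : ℂ) * hp1 + (1/2 : ℂ) * hm1 - h0
  have DX := three_linear_forms (u1 := a2) (u2 := a3) (w1 := b2) (w2 := b3) (t1 := c2) (t2 := c3)
    (fun y z => by linear_combination hcube 0 y z)
  have DY := three_linear_forms (u1 := a1) (u2 := a3) (w1 := b1) (w2 := b3) (t1 := c1) (t2 := c3)
    (fun x z => by linear_combination hcube x 0 z)
  have DZ := three_linear_forms (u1 := a1) (u2 := a2) (w1 := b1) (w2 := b2) (t1 := c1) (t2 := c2)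
    (fun x y => by linear_combination hcube x y 0)
  clear hfun ha hb hc hG hs
  rcases DX with ⟨hx1, hx2⟩ | ⟨hx1, hx2⟩ | ⟨hx1, hx2⟩ <;>
    rcases DY with ⟨hy1, hy2⟩ | ⟨hy1, hy2⟩ | ⟨hy1, hy2⟩ <;>
      rcases DZ with ⟨hz1, hz2⟩ | ⟨hz1, hz2⟩ | ⟨hz1, hz2⟩
  · exact absurd (hcube 1 1 1) (by
      simp only [hx1, hx2, hy1, hy2, hz1, hz2]; norm_num)
  · exact absurd (hcube 1 1 1) (by
      simp only [hx1, hx2, hy1, hy2, hz1, hz2]; norm_num)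
  · exact absurd (hcube 1 1 1) (by
      simp only [hx1, hx2, hy1, hy2, hz1, hz2]; norm_num)
  · exact absurd (hcube 1 1 1) (by
      simp only [hx1, hx2, hy1, hy2, hz1, hz2]; norm_num)
  · exact absurd (hcube 1 1 1) (by
      simp only [hx1, hx2, hy1, hy2, hz1, hz2]; norm_num)
  · -- good case id
    simp only [hx1, hx2, hy1, hy2, hz1, hz2, zero_mul, mul_zero, zero_add, add_zero]
      at hquad hcube hfm
    have hprod : a1 * b2 * c3 = 1 := by linear_combination hcube 1 1 1
    have hA2 : a1 ^ 2 = 1 := by linear_combination hquad 1 0 0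
    have hB2 : b2 ^ 2 = 1 := by linear_combination hquad 0 1 0
    have hC2 : c3 ^ 2 = 1 := by linear_combination hquad 0 0 1
    have hzc : c0 * (a1 * b2) = 0 := by
      linear_combination (-1/2 : ℂ) * hquad 1 1 0 + (1/2 : ℂ) * hA2 + (1/2 : ℂ) * hB2
    have hzb : b0 * (a1 * c3) = 0 := by
      linear_combination (-1/2 : ℂ) * hquad 1 0 1 + (1/2 : ℂ) * hA2 + (1/2 : ℂ) * hC2
    have hza : a0 * (b2 * c3) = 0 := by
      linear_combination (-1/2 : ℂ) * hquad 0 1 1 + (1/2 : ℂ) * hB2 + (1/2 : ℂ) * hC2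
    have hc0 : c0 = 0 := by linear_combination c3 * hzc - c0 * hprod
    have hb0 : b0 = 0 := by linear_combination b2 * hzb - b0 * hprod
    have ha0 : a0 = 0 := by linear_combination a1 * hza - a0 * hprod
    have hfeq : fmap P Q R =
        fun p : ℂ × ℂ × ℂ => (a1 * p.1, b2 * p.2.1, c3 * p.2.2) := by
      funext p
      rw [hfm p]
      refine Prod.ext ?_ (Prod.ext ?_ ?_) <;> simp only [ha0, hb0, hc0] <;> ring
    rw [hfeq]
    exact concl_diag_id (sq_pm hA2) (sq_pm hB2) (sq_pm hC2) hprod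
  · exact absurd (hcube 1 1 1) (by
      simp only [hx1, hx2, hy1, hy2, hz1, hz2]; norm_num)
  · -- good case s23
    simp only [hx1, hx2, hy1, hy2, hz1, hz2, zero_mul, mul_zero, zero_add, add_zero]
      at hquad hcube hfm
    have hprod : a1 * b3 * c2 = 1 := by linear_combination hcube 1 1 1
    have hA2 : a1 ^ 2 = 1 := by linear_combination hquad 1 0 0
    have hB2 : b3 ^ 2 = 1 := by linear_combination hquad 0 0 1
    have hC2 : c2 ^ 2 = 1 := by linear_combination hquad 0 1 0
    have hzc : c0 * (a1 * b3) = 0 := by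
      linear_combination (-1/2 : ℂ) * hquad 1 0 1 + (1/2 : ℂ) * hA2 + (1/2 : ℂ) * hB2
    have hzb : b0 * (a1 * c2) = 0 := by
      linear_combination (-1/2 : ℂ) * hquad 1 1 0 + (1/2 : ℂ) * hA2 + (1/2 : ℂ) * hC2
    have hza : a0 * (b3 * c2) = 0 := by
      linear_combination (-1/2 : ℂ) * hquad 0 1 1 + (1/2 : ℂ) * hB2 + (1/2 : ℂ) * hC2
    have hc0 : c0 = 0 := by linear_combination c2 * hzc - c0 * hprod
    have hb0 : b0 = 0 := by linear_combination b3 * hzb - b0 * hprod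
    have ha0 : a0 = 0 := by linear_combination a1 * hza - a0 * hprod
    have hfeq : fmap P Q R =
        fun p : ℂ × ℂ × ℂ => (a1 * p.1, b3 * p.2.2, c2 * p.2.1) := by
      funext p
      rw [hfm p]
      refine Prod.ext ?_ (Prod.ext ?_ ?_) <;> simp only [ha0, hb0, hc0] <;> ring
    rw [hfeq]
    exact concl_diag_s23 (sq_pm hA2) (sq_pm hB2) (sq_pm hC2) hprod
  · exact absurd (hcube 1 1 1) (by
      simp only [hx1, hx2, hy1, hy2, hz1, hz2]; norm_num)
  · exact absurd (hcube 1 1 1) (by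
      simp only [hx1, hx2, hy1, hy2, hz1, hz2]; norm_num)
  · exact absurd (hcube 1 1 1) (by
      simp only [hx1, hx2, hy1, hy2, hz1, hz2]; norm_num)
  · -- good case s12
    simp only [hx1, hx2, hy1, hy2, hz1, hz2, zero_mul, mul_zero, zero_add, add_zero]
      at hquad hcube hfm
    have hprod : a2 * b1 * c3 = 1 := by linear_combination hcube 1 1 1
    have hA2 : a2 ^ 2 = 1 := by linear_combination hquad 0 1 0
    have hB2 : b1 ^ 2 = 1 := by linear_combination hquad 1 0 0
    have hC2 : c3 ^ 2 = 1 := by linear_combination hquad 0 0 1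
    have hzc : c0 * (a2 * b1) = 0 := by
      linear_combination (-1/2 : ℂ) * hquad 1 1 0 + (1/2 : ℂ) * hA2 + (1/2 : ℂ) * hB2
    have hzb : b0 * (a2 * c3) = 0 := by
      linear_combination (-1/2 : ℂ) * hquad 0 1 1 + (1/2 : ℂ) * hA2 + (1/2 : ℂ) * hC2
    have hza : a0 * (b1 * c3) = 0 := by
      linear_combination (-1/2 : ℂ) * hquad 1 0 1 + (1/2 : ℂ) * hB2 + (1/2 : ℂ) * hC2
    have hc0 : c0 = 0 := by linear_combination c3 * hzc - c0 * hprod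
    have hb0 : b0 = 0 := by linear_combination b1 * hzb - b0 * hprod
    have ha0 : a0 = 0 := by linear_combination a2 * hza - a0 * hprod
    have hfeq : fmap P Q R =
        fun p : ℂ × ℂ × ℂ => (a2 * p.2.1, b1 * p.1, c3 * p.2.2) := by
      funext p
      rw [hfm p]
      refine Prod.ext ?_ (Prod.ext ?_ ?_) <;> simp only [ha0, hb0, hc0] <;> ring
    rw [hfeq]
    exact concl_diag_s12 (sq_pm hA2) (sq_pm hB2) (sq_pm hC2) hprod
  · exact absurd (hcube 1 1 1) (by
      simp only [hx1, hx2, hy1, hy2, hz1, hz2]; norm_num)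
  · exact absurd (hcube 1 1 1) (by
      simp only [hx1, hx2, hy1, hy2, hz1, hz2]; norm_num)
  · exact absurd (hcube 1 1 1) (by
      simp only [hx1, hx2, hy1, hy2, hz1, hz2]; norm_num)
  · -- good case c2
    simp only [hx1, hx2, hy1, hy2, hz1, hz2, zero_mul, mul_zero, zero_add, add_zero]
      at hquad hcube hfm
    have hprod : a3 * b1 * c2 = 1 := by linear_combination hcube 1 1 1
    have hA2 : a3 ^ 2 = 1 := by linear_combination hquad 0 0 1
    have hB2 : b1 ^ 2 = 1 := by linear_combination hquad 1 0 0
    have hC2 : c2 ^ 2 = 1 := by linear_combination hquad 0 1 0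
    have hzc : c0 * (a3 * b1) = 0 := by
      linear_combination (-1/2 : ℂ) * hquad 1 0 1 + (1/2 : ℂ) * hA2 + (1/2 : ℂ) * hB2
    have hzb : b0 * (a3 * c2) = 0 := by
      linear_combination (-1/2 : ℂ) * hquad 0 1 1 + (1/2 : ℂ) * hA2 + (1/2 : ℂ) * hC2
    have hza : a0 * (b1 * c2) = 0 := by
      linear_combination (-1/2 : ℂ) * hquad 1 1 0 + (1/2 : ℂ) * hB2 + (1/2 : ℂ) * hC2
    have hc0 : c0 = 0 := by linear_combination c2 * hzc - c0 * hprod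
    have hb0 : b0 = 0 := by linear_combination b1 * hzb - b0 * hprod
    have ha0 : a0 = 0 := by linear_combination a3 * hza - a0 * hprod
    have hfeq : fmap P Q R =
        fun p : ℂ × ℂ × ℂ => (a3 * p.2.2, b1 * p.1, c2 * p.2.1) := by
      funext p
      rw [hfm p]
      refine Prod.ext ?_ (Prod.ext ?_ ?_) <;> simp only [ha0, hb0, hc0] <;> ring
    rw [hfeq]
    exact concl_diag_c2 (sq_pm hA2) (sq_pm hB2) (sq_pm hC2) hprod
  · exact absurd (hcube 1 1 1) (by
      simp only [hx1, hx2, hy1, hy2, hz1, hz2]; norm_num)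
  · exact absurd (hcube 1 1 1) (by
      simp only [hx1, hx2, hy1, hy2, hz1, hz2]; norm_num)
  · exact absurd (hcube 1 1 1) (by
      simp only [hx1, hx2, hy1, hy2, hz1, hz2]; norm_num)
  · -- good case c1
    simp only [hx1, hx2, hy1, hy2, hz1, hz2, zero_mul, mul_zero, zero_add, add_zero]
      at hquad hcube hfm
    have hprod : a2 * b3 * c1 = 1 := by linear_combination hcube 1 1 1
    have hA2 : a2 ^ 2 = 1 := by linear_combination hquad 0 1 0
    have hB2 : b3 ^ 2 = 1 := by linear_combination hquad 0 0 1
    have hC2 : c1 ^ 2 = 1 := by linear_combination hquad 1 0 0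
    have hzc : c0 * (a2 * b3) = 0 := by
      linear_combination (-1/2 : ℂ) * hquad 0 1 1 + (1/2 : ℂ) * hA2 + (1/2 : ℂ) * hB2
    have hzb : b0 * (a2 * c1) = 0 := by
      linear_combination (-1/2 : ℂ) * hquad 1 1 0 + (1/2 : ℂ) * hA2 + (1/2 : ℂ) * hC2
    have hza : a0 * (b3 * c1) = 0 := by
      linear_combination (-1/2 : ℂ) * hquad 1 0 1 + (1/2 : ℂ) * hB2 + (1/2 : ℂ) * hC2
    have hc0 : c0 = 0 := by linear_combination c1 * hzc - c0 * hprod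
    have hb0 : b0 = 0 := by linear_combination b3 * hzb - b0 * hprod
    have ha0 : a0 = 0 := by linear_combination a2 * hza - a0 * hprod
    have hfeq : fmap P Q R =
        fun p : ℂ × ℂ × ℂ => (a2 * p.2.1, b3 * p.2.2, c1 * p.1) := by
      funext p
      rw [hfm p]
      refine Prod.ext ?_ (Prod.ext ?_ ?_) <;> simp only [ha0, hb0, hc0] <;> ring
    rw [hfeq]
    exact concl_diag_c1 (sq_pm hA2) (sq_pm hB2) (sq_pm hC2) hprod
  · exact absurd (hcube 1 1 1) (by
      simp only [hx1, hx2, hy1, hy2, hz1, hz2]; norm_num)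
  · -- good case s13
    simp only [hx1, hx2, hy1, hy2, hz1, hz2, zero_mul, mul_zero, zero_add, add_zero]
      at hquad hcube hfm
    have hprod : a3 * b2 * c1 = 1 := by linear_combination hcube 1 1 1
    have hA2 : a3 ^ 2 = 1 := by linear_combination hquad 0 0 1
    have hB2 : b2 ^ 2 = 1 := by linear_combination hquad 0 1 0
    have hC2 : c1 ^ 2 = 1 := by linear_combination hquad 1 0 0
    have hzc : c0 * (a3 * b2) = 0 := by
      linear_combination (-1/2 : ℂ) * hquad 0 1 1 + (1/2 : ℂ) * hA2 + (1/2 : ℂ) * hB2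
    have hzb : b0 * (a3 * c1) = 0 := by
      linear_combination (-1/2 : ℂ) * hquad 1 0 1 + (1/2 : ℂ) * hA2 + (1/2 : ℂ) * hC2
    have hza : a0 * (b2 * c1) = 0 := by
      linear_combination (-1/2 : ℂ) * hquad 1 1 0 + (1/2 : ℂ) * hB2 + (1/2 : ℂ) * hC2
    have hc0 : c0 = 0 := by linear_combination c1 * hzc - c0 * hprod
    have hb0 : b0 = 0 := by linear_combination b2 * hzb - b0 * hprod
    have ha0 : a0 = 0 := by linear_combination a3 * hza - a0 * hprod
    have hfeq : fmap P Q R =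
        fun p : ℂ × ℂ × ℂ => (a3 * p.2.2, b2 * p.2.1, c1 * p.1) := by
      funext p
      rw [hfm p]
      refine Prod.ext ?_ (Prod.ext ?_ ?_) <;> simp only [ha0, hb0, hc0] <;> ring
    rw [hfeq]
    exact concl_diag_s13 (sq_pm hA2) (sq_pm hB2) (sq_pm hC2) hprod
  · exact absurd (hcube 1 1 1) (by
      simp only [hx1, hx2, hy1, hy2, hz1, hz2]; norm_num)
  · exact absurd (hcube 1 1 1) (by
      simp only [hx1, hx2, hy1, hy2, hz1, hz2]; norm_num)
  · exact absurd (hcube 1 1 1) (by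
      simp only [hx1, hx2, hy1, hy2, hz1, hz2]; norm_num)
  · exact absurd (hcube 1 1 1) (by
      simp only [hx1, hx2, hy1, hy2, hz1, hz2]; norm_num)
  · exact absurd (hcube 1 1 1) (by
      simp only [hx1, hx2, hy1, hy2, hz1, hz2]; norm_num)


lemma v1_surj : Function.Surjective v1 := fun y => ⟨v1 y, congrFun v1_invol y⟩
lemma v2_surj : Function.Surjective v2 := fun y => ⟨v2 y, congrFun v2_invol y⟩
lemma v3_surj : Function.Surjective v3 := fun y => ⟨v3 y, congrFun v3_invol y⟩

lemma good_qrp {P Q R : MvPolynomial (Fin 3) ℂ} (h : Good P Q R) : Good Q R P := by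
  unfold Good at *; linear_combination h
lemma good_prq {P Q R : MvPolynomial (Fin 3) ℂ} (h : Good P Q R) : Good P R Q := by
  unfold Good at *; linear_combination h

lemma concl_comp_v1 {f : ℂ × ℂ × ℂ → ℂ × ℂ × ℂ} (h : Concl f) : Concl (v1 ∘ f) := by
  obtain ⟨hsing, hsgn⟩ := h
  constructor
  · intro p hp
    have hfp := hsing p hp
    simp only [Function.comp_apply]
    rw [v1_fix_sing hfp]
    exact hfp
  · intro e he
    obtain ⟨t, ht, hcomm⟩ := hsgn e he
    refine ⟨t, ht, ?_⟩
    calc (v1 ∘ f) ∘ sgn e = v1 ∘ (f ∘ sgn e) := by rw [Function.comp_assoc]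
    _ = v1 ∘ (sgn t ∘ f) := by rw [hcomm]
    _ = (v1 ∘ sgn t) ∘ f := by rw [Function.comp_assoc]
    _ = (sgn t ∘ v1) ∘ f := by rw [v1_sgn_comm ht]
    _ = sgn t ∘ (v1 ∘ f) := by rw [Function.comp_assoc]

lemma concl_comp_v2 {f : ℂ × ℂ × ℂ → ℂ × ℂ × ℂ} (h : Concl f) : Concl (v2 ∘ f) := by
  obtain ⟨hsing, hsgn⟩ := h
  constructor
  · intro p hp
    have hfp := hsing p hp
    simp only [Function.comp_apply]
    rw [v2_fix_sing hfp]
    exact hfp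
  · intro e he
    obtain ⟨t, ht, hcomm⟩ := hsgn e he
    refine ⟨t, ht, ?_⟩
    calc (v2 ∘ f) ∘ sgn e = v2 ∘ (f ∘ sgn e) := by rw [Function.comp_assoc]
    _ = v2 ∘ (sgn t ∘ f) := by rw [hcomm]
    _ = (v2 ∘ sgn t) ∘ f := by rw [Function.comp_assoc]
    _ = (sgn t ∘ v2) ∘ f := by rw [v2_sgn_comm ht]
    _ = sgn t ∘ (v2 ∘ f) := by rw [Function.comp_assoc]

lemma concl_comp_v3 {f : ℂ × ℂ × ℂ → ℂ × ℂ × ℂ} (h : Concl f) : Concl (v3 ∘ f) := by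
  obtain ⟨hsing, hsgn⟩ := h
  constructor
  · intro p hp
    have hfp := hsing p hp
    simp only [Function.comp_apply]
    rw [v3_fix_sing hfp]
    exact hfp
  · intro e he
    obtain ⟨t, ht, hcomm⟩ := hsgn e he
    refine ⟨t, ht, ?_⟩
    calc (v3 ∘ f) ∘ sgn e = v3 ∘ (f ∘ sgn e) := by rw [Function.comp_assoc]
    _ = v3 ∘ (sgn t ∘ f) := by rw [hcomm]
    _ = (v3 ∘ sgn t) ∘ f := by rw [Function.comp_assoc]
    _ = (sgn t ∘ v3) ∘ f := by rw [v3_sgn_comm ht]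
    _ = sgn t ∘ (v3 ∘ f) := by rw [Function.comp_assoc]

lemma norm_main : ∀ N : ℕ, ∀ P Q R : MvPolynomial (Fin 3) ℂ, Good P Q R →
    Function.Surjective (fmap P Q R) →
    P.totalDegree + Q.totalDegree + R.totalDegree ≤ N → Concl (fmap P Q R) := by
  intro N
  induction N using Nat.strong_induction_on with
  | _ N IH =>
  intro P Q R hG hs hdeg
  by_cases hsmall : P.totalDegree ≤ 1 ∧ Q.totalDegree ≤ 1 ∧ R.totalDegree ≤ 1
  · exact base_case hG hs hsmall.1 hsmall.2.1 hsmall.2.2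
  · have hP1 := one_le_tdeg_of_ne_C (surj_fst_ne hs)
    have hQ1 := one_le_tdeg_of_ne_C (surj_snd_ne hs)
    have hR1 := one_le_tdeg_of_ne_C (surj_thd_ne hs)
    have hPne := ne_zero_of_ne_C (surj_fst_ne hs)
    have hQne := ne_zero_of_ne_C (surj_snd_ne hs)
    have hRne := ne_zero_of_ne_C (surj_thd_ne hs)
    by_cases hc1 : P.totalDegree ≤ R.totalDegree ∧ Q.totalDegree ≤ R.totalDegree
    · -- third coordinate maximal
      have hR2 : 2 ≤ R.totalDegree := by omega
      have hG' : Good P Q (2 * P * Q - R) := good_v3 hG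
      have hcomp : v3 ∘ fmap P Q R = fmap P Q (2 * P * Q - R) := fmap_v3 P Q R
      have hs' : Function.Surjective (fmap P Q (2 * P * Q - R)) := by
        rw [← hcomp]; exact v3_surj.comp hs
      have hne : 2 * P * Q - R ≠ 0 := fun h0 => surj_thd_ne hs' 0 (by rw [h0, map_zero])
      have hlt : (2 * P * Q - R).totalDegree < R.totalDegree :=
        vieta_bound hG hPne hQne hRne hP1 hQ1 hc1.1 hc1.2 hR2 hne
      have hConcl' : Concl (fmap P Q (2 * P * Q - R)) :=
        IH (P.totalDegree + Q.totalDegree + (2 * P * Q - R).totalDegree) (by omega)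
          P Q _ hG' hs' le_rfl
      have hback : fmap P Q R = v3 ∘ fmap P Q (2 * P * Q - R) := by
        rw [← hcomp, ← Function.comp_assoc, v3_invol, Function.id_comp]
      rw [hback]
      exact concl_comp_v3 hConcl'
    · by_cases hc2 : P.totalDegree ≤ Q.totalDegree ∧ R.totalDegree ≤ Q.totalDegree
      · -- second coordinate maximal
        have hQ2 : 2 ≤ Q.totalDegree := by omega
        have hG' : Good P (2 * P * R - Q) R := good_v2 hG
        have hcomp : v2 ∘ fmap P Q R = fmap P (2 * P * R - Q) R := fmap_v2 P Q R
        have hs' : Function.Surjective (fmap P (2 * P * R - Q) R) := by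
          rw [← hcomp]; exact v2_surj.comp hs
        have hne : 2 * P * R - Q ≠ 0 := fun h0 => surj_snd_ne hs' 0 (by rw [h0, map_zero])
        have hlt : (2 * P * R - Q).totalDegree < Q.totalDegree :=
          vieta_bound (good_prq hG) hPne hRne hQne hP1 hR1 hc2.1 hc2.2 hQ2 hne
        have hConcl' : Concl (fmap P (2 * P * R - Q) R) :=
          IH (P.totalDegree + (2 * P * R - Q).totalDegree + R.totalDegree) (by omega)
            P _ R hG' hs' le_rfl
        have hback : fmap P Q R = v2 ∘ fmap P (2 * P * R - Q) R := by
          rw [← hcomp, ← Function.comp_assoc, v2_invol, Function.id_comp]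
        rw [hback]
        exact concl_comp_v2 hConcl'
      · -- first coordinate maximal
        have hQP : Q.totalDegree ≤ P.totalDegree := by omega
        have hRP : R.totalDegree ≤ P.totalDegree := by omega
        have hP2 : 2 ≤ P.totalDegree := by omega
        have hG' : Good (2 * Q * R - P) Q R := good_v1 hG
        have hcomp : v1 ∘ fmap P Q R = fmap (2 * Q * R - P) Q R := fmap_v1 P Q R
        have hs' : Function.Surjective (fmap (2 * Q * R - P) Q R) := by
          rw [← hcomp]; exact v1_surj.comp hs
        have hne : 2 * Q * R - P ≠ 0 := fun h0 => surj_fst_ne hs' 0 (by rw [h0, map_zero])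
        have hlt : (2 * Q * R - P).totalDegree < P.totalDegree :=
          vieta_bound (good_qrp hG) hQne hRne hPne hQ1 hR1 hQP hRP hP2 hne
        have hConcl' : Concl (fmap (2 * Q * R - P) Q R) :=
          IH ((2 * Q * R - P).totalDegree + Q.totalDegree + R.totalDegree) (by omega)
            _ Q R hG' hs' le_rfl
        have hback : fmap P Q R = v1 ∘ fmap (2 * Q * R - P) Q R := by
          rw [← hcomp, ← Function.comp_assoc, v1_invol, Function.id_comp]
        rw [hback]
        exact concl_comp_v1 hConcl'

/-- The key structural theorem: every surjective invariant-preserving polynomial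
map of `ℂ³` preserves the four singular points and normalizes the sign group. -/
lemma norm_all {A : ℂ × ℂ × ℂ → ℂ × ℂ × ℂ} (hA : IsPolyMap A) (hFV : PreservesFV A)
    (hs : Function.Surjective A) : Concl A := by
  obtain ⟨P, Q, R, rfl⟩ := isPolyMap_iff.mp hA
  exact norm_main (P.totalDegree + Q.totalDegree + R.totalDegree) P Q R
    (good_of_preserves hFV) hs le_rfl


lemma isPolyMap_sgn_comp {A : ℂ × ℂ × ℂ → ℂ × ℂ × ℂ} (e : ℂ × ℂ × ℂ)
    (hA : IsPolyMap A) : IsPolyMap (sgn e ∘ A) := by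
  obtain ⟨P, Q, R, rfl⟩ := isPolyMap_iff.mp hA
  exact isPolyMap_iff.mpr ⟨_, _, _, fmap_sgn e P Q R⟩

end RevAux

open RevAux in
/-- Theorem 3, reversing part: let `F` be a Nielsen trace map (with inverse
`F'`) which is truly reversible in `𝒜` (`F ∘ F ≠ id` and some
invariant-preserving polynomial map conjugates `F` to `F'`). Then every
invariant-preserving polynomial map `A` (with inverse `A'`) satisfying
`A ∘ F ∘ A⁻¹ = F` or `A ∘ F ∘ A⁻¹ = F⁻¹` factors uniquely as `A = σ ∘ H` with
`σ ∈ Σ` commuting with `F` and `H` a Nielsen trace map with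
`H ∘ F ∘ H⁻¹ = F` or `H ∘ F ∘ H⁻¹ = F⁻¹`;
i.e. `R_𝒜(F) = K_Σ(F) ⋊ R_𝒢(F)`. -/
theorem reversing_symmetry_group_decomposition
    (F F' : ℂ × ℂ × ℂ → ℂ × ℂ × ℂ) (hF : IsPolyMap F) (hFI : PreservesFV F)
    (hfix : F (1, 1, 1) = (1, 1, 1))
    (hFF' : F ∘ F' = id) (hF'F : F' ∘ F = id)
    (hniv : F ∘ F ≠ id)
    (hrev : ∃ G G' : ℂ × ℂ × ℂ → ℂ × ℂ × ℂ, IsPolyMap G ∧ PreservesFV G ∧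
      G ∘ G' = id ∧ G' ∘ G = id ∧ G ∘ F ∘ G' = F')
    (A A' : ℂ × ℂ × ℂ → ℂ × ℂ × ℂ) (hA : IsPolyMap A) (hAI : PreservesFV A)
    (hAA' : A ∘ A' = id) (hA'A : A' ∘ A = id)
    (hArev : A ∘ F ∘ A' = F ∨ A ∘ F ∘ A' = F') :
    ∃! p : (ℂ × ℂ × ℂ → ℂ × ℂ × ℂ) × (ℂ × ℂ × ℂ → ℂ × ℂ × ℂ),
      p.1 ∈ SigmaSet ∧ p.1 ∘ F = F ∘ p.1 ∧
      IsPolyMap p.2 ∧ PreservesFV p.2 ∧ p.2 (1, 1, 1) = (1, 1, 1) ∧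
      (∃ H' : ℂ × ℂ × ℂ → ℂ × ℂ × ℂ, p.2 ∘ H' = id ∧ H' ∘ p.2 = id ∧
        (p.2 ∘ F ∘ H' = F ∨ p.2 ∘ F ∘ H' = F')) ∧
      A = p.1 ∘ p.2 := by
  classical
  have hAsurj : Function.Surjective A := fun y => ⟨A' y, congrFun hAA' y⟩
  have hFsurj : Function.Surjective F := fun y => ⟨F' y, congrFun hFF' y⟩
  have hFinj : Function.Injective F := by
    intro x y hxy
    have hx := congrFun hF'F x
    have hy := congrFun hF'F y
    simp only [Function.comp_apply, id_eq] at hx hy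
    rw [← hx, ← hy, hxy]
  have hFF'p : ∀ y, F (F' y) = y := fun y => by simpa using congrFun hFF' y
  have hA'Ap : ∀ y, A' (A y) = y := fun y => by simpa using congrFun hA'A y
  have hAA'p : ∀ y, A (A' y) = y := fun y => by simpa using congrFun hAA' y
  have hCA := norm_all hA hAI hAsurj
  have hCF := norm_all hF hFI hFsurj
  set q := A (1, 1, 1) with hqdef
  have hq : IsSign q := hCA.1 (1, 1, 1) one_mem_sing
  have hFq : F q = q := by
    rcases hArev with h | h
    · have hAF : ∀ x, A (F x) = F (A x) := by
        intro x
        have h1 := congrFun h (A x)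
        have h2 : A' (A x) = x := congrFun hA'A x
        simp only [Function.comp_apply] at h1
        rw [h2] at h1
        exact h1
      have h3 := hAF (1, 1, 1)
      rw [hfix] at h3
      exact h3.symm
    · have hAF : ∀ x, A (F x) = F' (A x) := by
        intro x
        have h1 := congrFun h (A x)
        have h2 : A' (A x) = x := congrFun hA'A x
        simp only [Function.comp_apply] at h1
        rw [h2] at h1
        exact h1
      have h3 : q = F' q := by
        have := hAF (1, 1, 1)
        rw [hfix] at this
        exact this
      have h4 : F (F' q) = q := congrFun hFF' q
      rw [← h3] at h4
      exact h4
  have hσinvol : sgn q ∘ sgn q = id := sgn_sgn q hq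
  have hone : sgn q q = (1, 1, 1) := by
    have h0 : sgn q (sgn q (1, 1, 1)) = (1, 1, 1) := by simpa using congrFun hσinvol (1, 1, 1)
    rw [sgn_apply_one] at h0
    exact h0
  -- commutation of σ with F
  have hcomm : F ∘ sgn q = sgn q ∘ F := by
    obtain ⟨t, ht, hct⟩ := hCF.2 q hq
    have h1 := congrFun hct (1, 1, 1)
    simp only [Function.comp_apply] at h1
    rw [sgn_apply_one, hfix, sgn_apply_one] at h1
    have htq : t = q := by rw [← h1, hFq]
    rw [htq] at hct
    exact hct
  have hcommF' : F' ∘ sgn q = sgn q ∘ F' := by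
    funext y
    simp only [Function.comp_apply]
    apply hFinj
    have e1 : F (F' (sgn q y)) = sgn q y := congrFun hFF' (sgn q y)
    have e2 : F (sgn q (F' y)) = sgn q (F (F' y)) := by
      have := congrFun hcomm (F' y)
      simpa using this
    rw [e1, e2, hFF'p y]
  refine ⟨(sgn q, sgn q ∘ A), ⟨?_, ?_, ?_, ?_, ?_, ?_, ?_⟩, ?_⟩
  · exact mem_sigmaSet_iff.mpr ⟨q, hq, rfl⟩
  · exact hcomm.symm
  · exact isPolyMap_sgn_comp q hA
  · intro p
    simp only [Function.comp_apply]
    rw [preserves_sgn hq (A p), hAI p]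
  · simp only [Function.comp_apply]
    rw [← hqdef, hone]
  · refine ⟨A' ∘ sgn q, ?_, ?_, ?_⟩
    · funext y
      simp only [Function.comp_apply]
      rw [hAA'p (sgn q y)]
      have := congrFun hσinvol y
      simpa using this
    · funext y
      simp only [Function.comp_apply]
      have h1 : sgn q (sgn q (A y)) = A y := by simpa using congrFun hσinvol (A y)
      rw [h1]
      exact hA'Ap y
    · rcases hArev with h | h
      · left
        funext y
        simp only [Function.comp_apply]
        have h1 : A (F (A' (sgn q y))) = F (sgn q y) := by
          have := congrFun h (sgn q y)
          simpa using this
        rw [h1]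
        have h2 : sgn q (F (sgn q y)) = F (sgn q (sgn q y)) := by
          have := congrFun hcomm (sgn q y)
          simp only [Function.comp_apply] at this
          exact this.symm
        rw [h2]
        have h3 : sgn q (sgn q y) = y := by simpa using congrFun hσinvol y
        rw [h3]
      · right
        funext y
        simp only [Function.comp_apply]
        have h1 : A (F (A' (sgn q y))) = F' (sgn q y) := by
          have := congrFun h (sgn q y)
          simpa using this
        rw [h1]
        have h2 : sgn q (F' (sgn q y)) = F' (sgn q (sgn q y)) := by
          have := congrFun hcommF' (sgn q y)
          simp only [Function.comp_apply] at this
          exact this.symm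
        rw [h2]
        have h3 : sgn q (sgn q y) = y := by simpa using congrFun hσinvol y
        rw [h3]
  · funext x
    simp only [Function.comp_apply]
    exact (show sgn q (sgn q (A x)) = A x by simpa using congrFun hσinvol (A x)).symm
  · rintro ⟨s, H₂⟩ ⟨hsmem, hscomm, hpoly, hfv, hH21, hinv, hAeq⟩
    obtain ⟨e, he, rfl⟩ := mem_sigmaSet_iff.mp hsmem
    dsimp only at hscomm hpoly hfv hH21 hinv hAeq
    have hsq : e = q := by
      have h1 := congrFun hAeq (1, 1, 1)
      simp only [Function.comp_apply] at h1
      rw [hH21, sgn_apply_one] at h1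
      exact h1.symm
    have hH2 : H₂ = sgn q ∘ A := by
      funext x
      have h1 := congrFun hAeq x
      simp only [Function.comp_apply] at h1 ⊢
      rw [h1, hsq]
      exact (show sgn q (sgn q (H₂ x)) = H₂ x by
        simpa using congrFun (sgn_sgn q hq) (H₂ x)).symm
    exact Prod.ext (by rw [hsq]) hH2
end
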